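/- arXiv:1008.4205 — 5 statements merged into one kernel-verified Lean document; each statement's English description precedes it below -/
import Mathlib

section
/- Let a be a positive integer, let ω = exp(2πi/a) ∈ ℂ, and let s be an integer. Then (1/a)·∑_{k=1}^{a−1} ω^{ks}/(1 − ω^{−k}) = ⌊s/a⌋ − s/a + (a−1)/(2a), where the sum is over k = 1, …, a−1 (and is empty when a = 1). -/
/-!
Write `S(s) = ∑_{k=1}^{n-1} x_k^s / (1 - x_k⁻¹)` with `x_k = ζ^k`. Since
`x^(s+1) / (1 - x⁻¹) - x^s / (1 - x⁻¹) = x^(s+1)`, the difference `S(s+1) - S(s)` is the sum of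
the nontrivial powers of the root of unity `ζ^(s+1)`, which is `-1` unless `n ∣ s + 1`. Pairing
`k` with `n - k` and using `1 / (1 - x⁻¹) + 1 / (1 - x) = 1` gives `2 S(0) = n - 1`. As `S` is
`n`-periodic, `2 S(s) = n - 1 - 2 (s mod n)`, which is `2n` times the right-hand side.
-/

open Finset

theorem zpow_emod_natCast₀ {G₀ : Type*} [GroupWithZero G₀] {x : G₀} {n : ℕ} (h : x ^ n = 1)
    (m : ℤ) : x ^ (m % n) = x ^ m := by
  rcases eq_or_ne n 0 with rfl | hn
  · simp
  have hx : x ≠ 0 := by rintro rfl; simp [hn] at h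
  conv_rhs => rw [← Int.emod_add_mul_ediv m n]
  rw [zpow_add₀ hx, zpow_mul, zpow_natCast, h, one_zpow, mul_one]

section

variable {K : Type*} [Field K]

theorem sum_Ico_one_pow_eq_neg_one {z : K} {n : ℕ} (hn : 0 < n) (hz : z ^ n = 1)
    (hz1 : z ≠ 1) : ∑ k ∈ Ico 1 n, z ^ k = -1 := by
  have hgeom : ∑ k ∈ range n, z ^ k = 0 := by
    rw [geom_sum_eq hz1, hz, sub_self, zero_div]
  rw [range_eq_Ico, sum_eq_sum_Ico_succ_bot hn, pow_zero] at hgeom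
  linear_combination hgeom

theorem one_div_one_sub_inv_add_one_div_one_sub {x : K} (hx : x ≠ 0) (hx1 : x ≠ 1) :
    1 / (1 - x⁻¹) + 1 / (1 - x) = 1 := by
  have h1 : 1 - x ≠ 0 := sub_ne_zero.mpr hx1.symm
  have h2 : 1 - x⁻¹ ≠ 0 := sub_ne_zero.mpr (inv_ne_one.mpr hx1).symm
  field_simp
  ring

theorem zpow_add_one_div_one_sub_inv {x : K} (hx : x ≠ 0) (hx1 : x ≠ 1) (s : ℤ) :
    x ^ (s + 1) / (1 - x⁻¹) = x ^ s / (1 - x⁻¹) + x ^ (s + 1) := by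
  have h : 1 - x⁻¹ ≠ 0 := sub_ne_zero.mpr (inv_ne_one.mpr hx1).symm
  rw [div_add' _ _ _ h, zpow_add_one₀ hx]
  field_simp
  ring

/-- `sawtoothSum ζ n s / n` is the finite Fourier expansion of the sawtooth function
`⌊s/n⌋ - s/n + (n-1)/(2n)`. -/
def sawtoothSum (ζ : K) (n : ℕ) (s : ℤ) : K :=
  ∑ k ∈ Ico 1 n, (ζ ^ k) ^ s / (1 - (ζ ^ k)⁻¹)

namespace IsPrimitiveRoot

variable {ζ : K} {n : ℕ}

theorem pow_ne_zero_one_of_mem_Ico (hζ : IsPrimitiveRoot ζ n) {k : ℕ} (hk : k ∈ Ico 1 n) :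
    ζ ^ k ≠ 0 ∧ ζ ^ k ≠ 1 := by
  rw [mem_Ico] at hk
  exact ⟨pow_ne_zero _ (hζ.ne_zero (by omega)), hζ.pow_ne_one_of_pos_of_lt (by omega) hk.2⟩

theorem sawtoothSum_emod (hζ : IsPrimitiveRoot ζ n) (s : ℤ) :
    sawtoothSum ζ n (s % n) = sawtoothSum ζ n s := by
  refine sum_congr rfl fun k _ ↦ ?_
  rw [zpow_emod_natCast₀ (by rw [← pow_mul, mul_comm, pow_mul, hζ.pow_eq_one, one_pow])]

theorem sawtoothSum_add_one (hζ : IsPrimitiveRoot ζ n) (hn : 0 < n) {s : ℤ}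
    (hs : ¬ (n : ℤ) ∣ s + 1) : sawtoothSum ζ n (s + 1) = sawtoothSum ζ n s - 1 := by
  have hsum : ∑ k ∈ Ico 1 n, (ζ ^ k) ^ (s + 1) = -1 := by
    simp_rw [← zpow_natCast, ← zpow_mul, mul_comm _ (s + 1), zpow_mul, zpow_natCast]
    refine sum_Ico_one_pow_eq_neg_one hn ?_ (mt (hζ.zpow_eq_one_iff_dvd _).mp hs)
    rw [← zpow_natCast, ← zpow_mul, mul_comm, zpow_mul, hζ.zpow_eq_one, one_zpow]
  rw [sawtoothSum, sawtoothSum, sub_eq_add_neg, ← hsum, ← sum_add_distrib]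
  exact sum_congr rfl fun k hk ↦
    zpow_add_one_div_one_sub_inv (hζ.pow_ne_zero_one_of_mem_Ico hk).1
      (hζ.pow_ne_zero_one_of_mem_Ico hk).2 s

theorem two_mul_sawtoothSum_zero (hζ : IsPrimitiveRoot ζ n) (hn : 0 < n) :
    2 * sawtoothSum ζ n 0 = n - 1 := by
  have hreflect : ∑ k ∈ Ico 1 n, 1 / (1 - (ζ ^ k)⁻¹) = ∑ k ∈ Ico 1 n, 1 / (1 - ζ ^ k) := by
    have h := sum_Ico_reflect (fun k ↦ 1 / (1 - ζ ^ k)) 1 (Nat.le_succ n)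
    rw [Nat.add_sub_cancel_left, Nat.add_sub_cancel] at h
    rw [← h]
    refine sum_congr rfl fun k hk ↦ ?_
    rw [← eq_inv_of_mul_eq_one_left
      (by rw [pow_sub_mul_pow _ (mem_Ico.mp hk).2.le, hζ.pow_eq_one])]
  simp only [sawtoothSum, zpow_zero]
  rw [two_mul]
  nth_rw 2 [hreflect]
  rw [← sum_add_distrib, sum_congr rfl fun k hk ↦ one_div_one_sub_inv_add_one_div_one_sub
    (hζ.pow_ne_zero_one_of_mem_Ico hk).1 (hζ.pow_ne_zero_one_of_mem_Ico hk).2]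
  simp [Nat.cast_sub hn]

theorem sawtoothSum_of_nonneg_of_lt (hζ : IsPrimitiveRoot ζ n) (hn : 0 < n) {r : ℤ}
    (hr₀ : 0 ≤ r) (hrn : r < n) : sawtoothSum ζ n r = sawtoothSum ζ n 0 - r := by
  induction r, hr₀ using Int.leInduction with
  | base => simp
  | succ r hr₀ ih =>
    have hndvd : ¬ (n : ℤ) ∣ r + 1 := fun h ↦ by
      have := Int.eq_zero_of_dvd_of_nonneg_of_lt (by omega) hrn h
      omega
    rw [hζ.sawtoothSum_add_one hn hndvd, ih (by omega)]
    push_cast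
    ring

theorem two_mul_sawtoothSum (hζ : IsPrimitiveRoot ζ n) (hn : 0 < n) (s : ℤ) :
    2 * sawtoothSum ζ n s = n - 1 - 2 * ((s % n : ℤ) : K) := by
  have hn' : (n : ℤ) ≠ 0 := by omega
  rw [← hζ.sawtoothSum_emod, hζ.sawtoothSum_of_nonneg_of_lt hn (Int.emod_nonneg s hn')
    (Int.emod_lt_of_pos s (by omega)), mul_sub, hζ.two_mul_sawtoothSum_zero hn]

end IsPrimitiveRoot

end

/-- For a positive integer `a`, `ω = exp(2πi/a)`, and an integer `s`,
`(1/a)·∑_{k=1}^{a−1} ω^{ks}/(1 − ω^{−k}) = ⌊s/a⌋ − s/a + (a−1)/(2a)`. -/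
theorem statement0 (a : ℕ) (ha : 0 < a) (s : ℤ) :
    (1 / (a : ℂ)) *
        ∑ k ∈ Finset.Ico 1 a,
          Complex.exp (2 * Real.pi * Complex.I / a) ^ ((k : ℤ) * s) /
            (1 - Complex.exp (2 * Real.pi * Complex.I / a) ^ (-(k : ℤ))) =
      (⌊(s : ℚ) / (a : ℚ)⌋ : ℂ) - (s : ℂ) / (a : ℂ) + ((a : ℂ) - 1) / (2 * (a : ℂ)) := by
  set ω := Complex.exp (2 * Real.pi * Complex.I / a)
  have hω : IsPrimitiveRoot ω a := Complex.isPrimitiveRoot_exp a ha.ne'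
  have hsum : ∑ k ∈ Finset.Ico 1 a, ω ^ ((k : ℤ) * s) / (1 - ω ^ (-(k : ℤ))) =
      sawtoothSum ω a s := by
    simp only [sawtoothSum, zpow_mul, zpow_neg, zpow_natCast]
  have hfloor : ⌊(s : ℚ) / (a : ℚ)⌋ = s / (a : ℤ) := Rat.floor_intCast_div_natCast s a
  have hdiv : (s : ℂ) = a * ((s / (a : ℤ) : ℤ) : ℂ) + ((s % (a : ℤ) : ℤ) : ℂ) := by
    exact_mod_cast (Int.mul_ediv_add_emod s a).symm
  have ha' : (a : ℂ) ≠ 0 := Nat.cast_ne_zero.mpr ha.ne'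
  rw [hsum, hfloor, hdiv]
  field_simp
  linear_combination hω.two_mul_sawtoothSum ha s
end

section
/- Let ν be a partition with conjugate ν′, set S(ν) = {ν_j − j − 1 : j ∈ ℕ} ⊆ ℤ, and let Hook(ν) = {(t,t′) ∈ ℤ² : t < t′, t ∉ S(ν), t′ ∈ S(ν)}. Then the map sending a cell (a,b) of ν to the pair (a − ν′_a, ν_b − b − 1) is a bijection from the set of cells of ν onto Hook(ν); moreover for each cell (a,b), the difference (ν_b − b − 1) − (a − ν′_a) equals the hook length ν_b + ν′_a − a − b − 1 of (a,b). In particular the cardinality of Hook(ν) equals the number of cells of ν. -/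
/-- A partition: a weakly decreasing sequence of nonnegative integers, eventually zero.
Its Young diagram is `{(i,j) : i < part j}`. -/
structure PartitionSeq where
  part : ℕ → ℕ
  antitone' : ∀ ⦃i j : ℕ⦄, i ≤ j → part j ≤ part i
  eventually_zero : ∃ N : ℕ, ∀ i : ℕ, N ≤ i → part i = 0

/-- The set of cells of the Young diagram of `ν`. -/
def cells (ν : PartitionSeq) : Set (ℕ × ℕ) := {p : ℕ × ℕ | p.1 < ν.part p.2}

/-- The set `S(ν) = {ν_j − j − 1 : j ∈ ℕ} ⊆ ℤ`. -/
def Sset (ν : PartitionSeq) : Set ℤ := {s : ℤ | ∃ j : ℕ, s = (ν.part j : ℤ) - j - 1}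

/-- `Hook(ν) = {(t,t′) ∈ ℤ² : t < t′, t ∉ S(ν), t′ ∈ S(ν)}`. -/
def Hook (ν : PartitionSeq) : Set (ℤ × ℤ) :=
  {q : ℤ × ℤ | q.1 < q.2 ∧ q.1 ∉ Sset ν ∧ q.2 ∈ Sset ν}

/-!
Everything follows from `a < ν_b ↔ b < ν′_a`. It makes `a ↦ a − ν′_a` strictly increasing with
values off `S(ν)`, and turns `(a, b) ∈ ν` into `a − ν′_a < ν_b − b − 1`. Conversely every
`t ∉ S(ν)` is `a − ν′_a` for `a = t + k`, with `k` the first index such that `ν_k − k − 1 < t`;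
so `ℤ` splits into `S(ν)` and `{a − ν′_a}`, and `Hook(ν)` is the image of the cells.
-/

namespace PartitionSeq

variable (ν : PartitionSeq)

lemma strictAnti_part_sub : StrictAnti fun j : ℕ => (ν.part j : ℤ) - j - 1 := by
  intro i j hij
  have := ν.antitone' hij.le
  simp only
  omega

def IsConjugate (ν' : ℕ → ℕ) : Prop := ∀ a j : ℕ, a < ν.part j ↔ j < ν' a

variable {ν}

lemma isConjugate_of_ncard_eq {ν' : ℕ → ℕ}
    (hconj : ∀ i : ℕ, ν' i = {j : ℕ | i < ν.part j}.ncard) : ν.IsConjugate ν' := by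
  intro a
  obtain ⟨N, hN⟩ := ν.eventually_zero
  have hex : ∃ j, ν.part j ≤ a := ⟨N, by simp [hN N le_rfl]⟩
  have hrow : {j : ℕ | a < ν.part j} = Set.Iio (Nat.find hex) := by
    ext j
    simp only [Set.mem_ofPred_eq, Set.mem_Iio, Nat.lt_find_iff, not_le]
    exact ⟨fun h i hij => h.trans_le (ν.antitone' hij), fun h => h j le_rfl⟩
  have hcard : ν' a = Nat.find hex := by
    rw [hconj, hrow, ← Finset.coe_range, Set.ncard_coe_finset, Finset.card_range]
  intro j
  rw [hcard]
  exact Set.ext_iff.1 hrow j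

namespace IsConjugate

variable {ν' : ℕ → ℕ} (h : ν.IsConjugate ν')
include h

lemma strictMono_sub : StrictMono fun a : ℕ => (a : ℤ) - ν' a := by
  intro a₁ a₂ ha
  have hle : ν' a₂ ≤ ν' a₁ := by
    by_contra! hlt
    have := (h a₂ (ν' a₁)).2 hlt
    exact lt_irrefl _ ((h a₁ (ν' a₁)).1 (ha.trans this))
  simp only
  omega

lemma apply_eq_of_forall_iff {a k : ℕ} (hk : ∀ j, a < ν.part j ↔ j < k) : ν' a = k :=
  _root_.eq_of_forall_lt_iff fun j => (h a j).symm.trans (hk j)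

lemma mem_cells_iff {p : ℕ × ℕ} :
    p ∈ cells ν ↔ (p.1 : ℤ) - ν' p.1 < (ν.part p.2 : ℤ) - p.2 - 1 := by
  have hp := h p.1 p.2
  change p.1 < ν.part p.2 ↔ _
  omega

lemma sub_notMem_sset (a : ℕ) : (a : ℤ) - ν' a ∉ Sset ν := by
  rintro ⟨j, hj⟩
  have := h a j
  omega

lemma notMem_sset_iff {t : ℤ} : t ∉ Sset ν ↔ ∃ a : ℕ, (a : ℤ) - ν' a = t := by
  refine ⟨fun ht => ?_, fun ⟨a, ha⟩ => ha ▸ h.sub_notMem_sset a⟩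
  obtain ⟨N, hN⟩ := ν.eventually_zero
  have hex : ∃ j : ℕ, (ν.part j : ℤ) - j - 1 < t :=
    ⟨N + t.natAbs, by rw [hN _ (Nat.le_add_right _ _)]; omega⟩
  set k := Nat.find hex
  have hk : (ν.part k : ℤ) - k - 1 < t := Nat.find_spec hex
  have hbefore : ∀ j < k, t < (ν.part j : ℤ) - j - 1 := fun j hj =>
    lt_of_le_of_ne (not_lt.1 (Nat.find_min hex hj)) fun e => ht ⟨j, e⟩
  refine ⟨(t + k).toNat, ?_⟩
  suffices ν' (t + k).toNat = k by omega
  refine h.apply_eq_of_forall_iff fun j => ⟨fun hj => ?_, fun hj => ?_⟩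
  · by_contra! hkj
    have := ν.antitone' hkj
    omega
  · have := hbefore (k - 1) (by omega)
    have := ν.antitone' (show j ≤ k - 1 by omega)
    omega

lemma bijOn_cells_hook :
    Set.BijOn (fun p : ℕ × ℕ => ((p.1 : ℤ) - ν' p.1, (ν.part p.2 : ℤ) - p.2 - 1))
      (cells ν) (Hook ν) := by
  refine ⟨fun p hp => ⟨h.mem_cells_iff.1 hp, h.sub_notMem_sset p.1, p.2, rfl⟩,
    fun p _ q _ e => Prod.ext (h.strictMono_sub.injective (congrArg Prod.fst e))
      (ν.strictAnti_part_sub.injective (congrArg Prod.snd e)), ?_⟩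
  rintro ⟨t, t'⟩ ⟨hlt, ht, b, rfl⟩
  obtain ⟨a, rfl⟩ := h.notMem_sset_iff.1 ht
  exact ⟨(a, b), h.mem_cells_iff.2 hlt, rfl⟩

end IsConjugate

end PartitionSeq

/-- The map `(a,b) ↦ (a − ν′_a, ν_b − b − 1)` is a bijection from the
cells of `ν` onto `Hook(ν)`; for each cell the difference of the two coordinates of its
image equals the hook length `ν_b + ν′_a − a − b − 1`; in particular
`#Hook(ν) = #cells(ν)`. -/
theorem statement3 (ν : PartitionSeq) (ν' : ℕ → ℕ)
    (hconj : ∀ i : ℕ, ν' i = {j : ℕ | i < ν.part j}.ncard) :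
    Set.BijOn (fun p : ℕ × ℕ => ((p.1 : ℤ) - (ν' p.1 : ℤ), (ν.part p.2 : ℤ) - p.2 - 1))
      (cells ν) (Hook ν) ∧
    (∀ p : ℕ × ℕ, p ∈ cells ν →
      ((ν.part p.2 : ℤ) - p.2 - 1) - ((p.1 : ℤ) - (ν' p.1 : ℤ))
        = (ν.part p.2 : ℤ) + (ν' p.1 : ℤ) - p.1 - p.2 - 1) ∧
    (Hook ν).ncard = (cells ν).ncard := by
  have hbij := (PartitionSeq.isConjugate_of_ncard_eq hconj).bijOn_cells_hook
  exact ⟨hbij, fun _ _ => by ring, by rw [← hbij.image_eq, hbij.injOn.ncard_image]⟩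
end

section
/- Let ν and ρ be partitions, and for a partition π let π(·): ℤ → {+1,−1} denote its edge sequence. Suppose there are integers t₁ < t₂ such that ν(t₁) = +1, ν(t₂) = −1, ρ(t₁) = −1, ρ(t₂) = +1, and ν(t) = ρ(t) for all t ∉ {t₁, t₂}. Then the Young diagram of ν is contained in that of ρ, and the content map (i,j) ↦ i − j restricts to a bijection from the set of cells of ρ not in ν onto the integer interval {t₁+1, …, t₂}. In particular |ρ| − |ν| = t₂ − t₁, and no two cells of ρ∖ν have the same content. -/
open Classical in
/-- The edge sequence of a partition: `ν(t) = +1` if `t ∈ {ν_j − j − 1 : j ∈ ℕ}`,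
and `ν(t) = −1` otherwise. -/
noncomputable def edgeSeq (ν : PartitionSeq) (t : ℤ) : ℤ :=
  if ∃ j : ℕ, t = (ν.part j : ℤ) - j - 1 then 1 else -1

lemma StrictAnti.add_le_apply_zero {s : ℕ → ℤ} (hs : StrictAnti s) (k : ℕ) : s k + k ≤ s 0 := by
  induction k with
  | zero => simp
  | succ k ih =>
    have := hs (Nat.lt_add_one k)
    push_cast
    omega

lemma StrictAnti.finite_preimage_Ici {s : ℕ → ℤ} (hs : StrictAnti s) (c : ℤ) :
    (s ⁻¹' Set.Ici c).Finite :=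
  (Set.finite_Iic (s 0 - c).toNat).subset fun k (hk : c ≤ s k) => by
    have := hs.add_le_apply_zero k
    simp only [Set.mem_Iic]
    omega

/-- The indices `k` with `c ≤ s k` form an initial segment of `ℕ`. -/
lemma StrictAnti.lt_ncard_range_inter_Ici_iff {s : ℕ → ℤ} (hs : StrictAnti s) (c : ℤ) (j : ℕ) :
    j < (Set.range s ∩ Set.Ici c).ncard ↔ c ≤ s j := by
  rw [← Set.image_preimage_eq_range_inter, Set.ncard_image_of_injective _ hs.injective]
  constructor
  · intro hj
    by_contra! hsj
    have hsub : s ⁻¹' Set.Ici c ⊆ Set.Iio j := fun k (hk : c ≤ s k) =>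
      lt_of_not_ge fun hjk => hsj.not_ge (hk.trans (hs.antitone hjk))
    have := Set.ncard_le_ncard hsub (Set.finite_Iio j)
    rw [Set.ncard_Iio_nat] at this
    omega
  · intro hsj
    calc j < (Set.Iic j).ncard := by rw [Set.ncard_Iic_nat]; omega
      _ ≤ _ := Set.ncard_le_ncard (fun k (hk : k ≤ j) => hsj.trans (hs.antitone hk))
          (hs.finite_preimage_Ici c)

lemma Set.ncard_insert_sdiff_singleton_inter_Ici {α : Type*} [LinearOrder α] {A : Set α}
    {a b c : α} (hA : (A ∩ Set.Ici c).Finite) (ha : a ∈ A) (hb : b ∉ A) (hab : a < b) :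
    (insert b (A \ {a}) ∩ Set.Ici c).ncard =
      (A ∩ Set.Ici c).ncard + if c ∈ Set.Ioc a b then 1 else 0 := by
  have hb' : b ∉ (A ∩ Set.Ici c) \ {a} := fun h => hb h.1.1
  by_cases hcb : c ≤ b
  · rw [Set.insert_inter_of_mem (Set.mem_Ici.2 hcb), Set.sdiff_inter_right_comm,
      Set.ncard_insert_of_notMem hb' hA.sdiff]
    by_cases hca : c ≤ a
    · rw [Set.ncard_sdiff_singleton_add_one (s := A ∩ Set.Ici c) ⟨ha, hca⟩ hA,
        if_neg fun h => h.1.not_ge hca, add_zero]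
    · rw [Set.sdiff_singleton_eq_self fun h => hca h.2, if_pos ⟨not_le.1 hca, hcb⟩]
  · have hca : ¬c ≤ a := fun h => hcb (h.trans hab.le)
    rw [Set.insert_inter_of_notMem (t := Set.Ici c) hcb, Set.sdiff_inter_right_comm,
      Set.sdiff_singleton_eq_self fun h => hca h.2, if_neg fun h => hcb h.2, add_zero]

def content (p : ℕ × ℕ) : ℤ := (p.1 : ℤ) - p.2

namespace PartitionSeq

def edgePos (ν : PartitionSeq) (j : ℕ) : ℤ := (ν.part j : ℤ) - j - 1

def edgeSet (ν : PartitionSeq) : Set ℤ := Set.range ν.edgePos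

/-- The cells of content `c` are the `(c + j, j)` with `j < ν.edgeCount c`. -/
noncomputable def edgeCount (ν : PartitionSeq) (c : ℤ) : ℕ := (ν.edgeSet ∩ Set.Ici c).ncard

lemma strictAnti_edgePos (ν : PartitionSeq) : StrictAnti ν.edgePos := fun j k hjk => by
  have := ν.antitone' hjk.le
  simp only [edgePos]
  omega

lemma edgeSet_inter_Ici_finite (ν : PartitionSeq) (c : ℤ) : (ν.edgeSet ∩ Set.Ici c).Finite := by
  rw [edgeSet, ← Set.image_preimage_eq_range_inter]
  exact (ν.strictAnti_edgePos.finite_preimage_Ici c).image _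

lemma lt_edgeCount_iff (ν : PartitionSeq) (c : ℤ) (j : ℕ) :
    j < ν.edgeCount c ↔ c ≤ ν.edgePos j :=
  ν.strictAnti_edgePos.lt_ncard_range_inter_Ici_iff c j

lemma mem_cells_iff_lt_edgeCount (ν : PartitionSeq) (p : ℕ × ℕ) :
    p ∈ cells ν ↔ p.2 < ν.edgeCount (content p) := by
  rw [lt_edgeCount_iff, cells, Set.mem_ofPred_eq, edgePos, content]
  omega

lemma neg_le_edgeCount (ν : PartitionSeq) (c : ℤ) : -c ≤ ν.edgeCount c := by
  rcases le_or_gt 0 c with hc | hc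
  · omega
  · have : (-c - 1).toNat < ν.edgeCount c := by
      rw [lt_edgeCount_iff, edgePos]
      omega
    omega

lemma cells_finite (ν : PartitionSeq) : (cells ν).Finite := by
  obtain ⟨N, hN⟩ := ν.eventually_zero
  refine ((Set.finite_Iio (ν.part 0)).prod (Set.finite_Iio N)).subset fun p (hp : p.1 < _) => ?_
  refine ⟨hp.trans_le (ν.antitone' (Nat.zero_le _)), ?_⟩
  by_contra! hN'
  rw [hN p.2 (not_lt.1 hN')] at hp
  exact Nat.not_lt_zero _ hp

lemma edgeSeq_eq_one_iff (ν : PartitionSeq) (t : ℤ) : edgeSeq ν t = 1 ↔ t ∈ ν.edgeSet := by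
  have : (∃ j : ℕ, t = (ν.part j : ℤ) - j - 1) ↔ t ∈ ν.edgeSet := exists_congr fun _ => eq_comm
  unfold edgeSeq
  split_ifs <;> simp_all

lemma edgeSeq_eq_neg_one_iff (ν : PartitionSeq) (t : ℤ) : edgeSeq ν t = -1 ↔ t ∉ ν.edgeSet := by
  rw [← edgeSeq_eq_one_iff]
  unfold edgeSeq
  split_ifs <;> simp

lemma edgeSet_eq_insert_sdiff_of_edgeSeq {ν ρ : PartitionSeq} {t₁ t₂ : ℤ} (hne : t₁ ≠ t₂)
    (h1 : edgeSeq ν t₁ = 1) (h3 : edgeSeq ρ t₁ = -1) (h4 : edgeSeq ρ t₂ = 1)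
    (h5 : ∀ t : ℤ, t ≠ t₁ → t ≠ t₂ → edgeSeq ν t = edgeSeq ρ t) :
    ρ.edgeSet = insert t₂ (ν.edgeSet \ {t₁}) := by
  ext t
  rw [Set.mem_insert_iff, Set.mem_sdiff, Set.mem_singleton_iff]
  rcases eq_or_ne t t₂ with rfl | ht₂
  · simpa [edgeSeq_eq_one_iff] using h4
  rcases eq_or_ne t t₁ with rfl | ht₁
  · simpa [edgeSeq_eq_neg_one_iff, hne] using h3
  rw [← edgeSeq_eq_one_iff, ← edgeSeq_eq_one_iff, h5 t ht₁ ht₂]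
  simp [ht₁, ht₂]

lemma cells_subset_of_edgeCount_le {ν ρ : PartitionSeq} (h : ∀ c, ν.edgeCount c ≤ ρ.edgeCount c) :
    cells ν ⊆ cells ρ := fun p hp => by
  rw [mem_cells_iff_lt_edgeCount] at hp ⊢
  exact hp.trans_le (h _)

section Skew

variable {ν ρ : PartitionSeq} {I : Set ℤ} [DecidablePred (· ∈ I)]

lemma mem_cells_sdiff_iff
    (h : ∀ c, ρ.edgeCount c = ν.edgeCount c + if c ∈ I then 1 else 0) (p : ℕ × ℕ) :
    p ∈ cells ρ \ cells ν ↔ content p ∈ I ∧ p.2 = ν.edgeCount (content p) := by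
  simp only [Set.mem_sdiff, mem_cells_iff_lt_edgeCount, h]
  split_ifs <;> simp_all; omega

lemma bijOn_content_cells_sdiff
    (h : ∀ c, ρ.edgeCount c = ν.edgeCount c + if c ∈ I then 1 else 0) :
    Set.BijOn content (cells ρ \ cells ν) I := by
  refine ⟨fun p hp => ((mem_cells_sdiff_iff h p).1 hp).1, fun p hp q hq hpq => ?_, fun c hc => ?_⟩
  · rw [mem_cells_sdiff_iff h] at hp hq
    have h2 : p.2 = q.2 := by rw [hp.2, hq.2, hpq]
    simp only [content] at hpq
    exact Prod.ext (by omega) h2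
  · have := ν.neg_le_edgeCount c
    have hcontent : content ((c + ν.edgeCount c).toNat, ν.edgeCount c) = c := by
      simp only [content]; omega
    refine ⟨_, (mem_cells_sdiff_iff h _).2 ⟨?_, ?_⟩, hcontent⟩ <;> rw [hcontent]
    exact hc

end Skew

end PartitionSeq

/-- If the edge sequences of partitions `ν` and `ρ` differ only at
`t₁ < t₂`, with `ν(t₁) = +1, ν(t₂) = −1, ρ(t₁) = −1, ρ(t₂) = +1`, then the diagram of
`ν` is contained in that of `ρ`, and the content map `(i,j) ↦ i − j` is a bijection from
`ρ∖ν` onto `{t₁+1, …, t₂}`. In particular `|ρ| − |ν| = t₂ − t₁`, and no two cells of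
`ρ∖ν` have the same content. -/
theorem statement5 (ν ρ : PartitionSeq) (t₁ t₂ : ℤ) (hlt : t₁ < t₂)
    (h1 : edgeSeq ν t₁ = 1) (h2 : edgeSeq ν t₂ = -1)
    (h3 : edgeSeq ρ t₁ = -1) (h4 : edgeSeq ρ t₂ = 1)
    (h5 : ∀ t : ℤ, t ≠ t₁ → t ≠ t₂ → edgeSeq ν t = edgeSeq ρ t) :
    cells ν ⊆ cells ρ ∧
    Set.BijOn (fun p : ℕ × ℕ => (p.1 : ℤ) - (p.2 : ℤ)) (cells ρ \ cells ν)
      (Set.Ioc t₁ t₂) ∧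
    ((cells ρ).ncard : ℤ) - ((cells ν).ncard : ℤ) = t₂ - t₁ ∧
    Set.InjOn (fun p : ℕ × ℕ => (p.1 : ℤ) - (p.2 : ℤ)) (cells ρ \ cells ν) := by
  have hcount (c : ℤ) :
      ρ.edgeCount c = ν.edgeCount c + if c ∈ Set.Ioc t₁ t₂ then 1 else 0 := by
    rw [PartitionSeq.edgeCount, PartitionSeq.edgeSet_eq_insert_sdiff_of_edgeSeq hlt.ne h1 h3 h4 h5,
      Set.ncard_insert_sdiff_singleton_inter_Ici (ν.edgeSet_inter_Ici_finite c)
        ((ν.edgeSeq_eq_one_iff t₁).1 h1) ((ν.edgeSeq_eq_neg_one_iff t₂).1 h2) hlt,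
      PartitionSeq.edgeCount]
  have hsub : cells ν ⊆ cells ρ := PartitionSeq.cells_subset_of_edgeCount_le fun c => by
    rw [hcount]
    exact Nat.le_add_right _ _
  have hbij : Set.BijOn content (cells ρ \ cells ν) (Set.Ioc t₁ t₂) :=
    PartitionSeq.bijOn_content_cells_sdiff hcount
  refine ⟨hsub, hbij, ?_, hbij.injOn⟩
  rw [← Set.cast_ncard_sdiff hsub ρ.cells_finite, hbij.ncard_eq, ← Finset.coe_Ioc,
    Set.ncard_coe_finset, Int.card_Ioc_of_le _ _ hlt.le]
end

section
/- Let λ and μ be partitions. For N ∈ ℤ let f(N) be the number of partitions ρ with |ρ| = N, λ ≺ ρ and μ ≺ ρ, and let g(M) be the number of partitions η with |η| = M, η ≺ λ and η ≺ μ (these sets are finite, and f(N) = 0, g(M) = 0 when N < 0, M < 0). Then for every integer N, f(N) − f(N−1) = g(|λ| + |μ| − N). -/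
/-- The size `|ν| = ∑_j ν_j` of a partition. -/
noncomputable def size (ν : PartitionSeq) : ℕ := ∑ᶠ j : ℕ, ν.part j

/-- `Interlaces μ λ` means `μ ≺ λ`, i.e. `λ_0 ≥ μ_0 ≥ λ_1 ≥ μ_1 ≥ ⋯`. -/
def Interlaces (μ lam : PartitionSeq) : Prop :=
  ∀ j : ℕ, μ.part j ≤ lam.part j ∧ lam.part (j + 1) ≤ μ.part j

namespace PartitionSeq

@[ext]
theorem ext {ρ σ : PartitionSeq} (h : ρ.part = σ.part) : ρ = σ := by
  cases ρ; cases σ; cases h; rfl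

theorem finite_support (ν : PartitionSeq) : (Function.support ν.part).Finite := by
  obtain ⟨K, hK⟩ := ν.eventually_zero
  refine (Set.finite_Iio K).subset fun j hj => ?_
  by_contra hjK
  exact hj (hK j (not_lt.mp hjK))

theorem size_eq_sum_range (ν : PartitionSeq) {K : ℕ} (hK : ∀ i, K ≤ i → ν.part i = 0) :
    size ν = ∑ j ∈ Finset.range K, ν.part j := by
  refine finsum_eq_sum_of_support_subset _ fun j hj => ?_
  by_contra hjK
  exact hj (hK j (by simpa using hjK))

theorem size_add_size_of_part_add_part {α β γ δ : PartitionSeq}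
    (h : ∀ j, α.part j + β.part j = γ.part j + δ.part j) :
    size α + size β = size γ + size δ := by
  unfold size
  rw [← finsum_add_distrib α.finite_support β.finite_support,
    ← finsum_add_distrib γ.finite_support δ.finite_support]
  exact finsum_congr h

theorem succ_mul_part_le_size (ν : PartitionSeq) (j : ℕ) : (j + 1) * ν.part j ≤ size ν := by
  obtain ⟨K, hK⟩ := ν.eventually_zero
  rw [size_eq_sum_range ν (K := max K (j + 1)) fun i hi => hK i (le_of_max_le_left hi)]
  calc (j + 1) * ν.part j = ∑ _i ∈ Finset.range (j + 1), ν.part j := by simp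
    _ ≤ ∑ i ∈ Finset.range (j + 1), ν.part i :=
        Finset.sum_le_sum fun i hi => ν.antitone' (Nat.lt_succ_iff.mp (Finset.mem_range.mp hi))
    _ ≤ ∑ i ∈ Finset.range (max K (j + 1)), ν.part i :=
        Finset.sum_le_sum_of_subset (Finset.range_subset_range.mpr (le_max_right _ _))

theorem part_le_size (ν : PartitionSeq) (j : ℕ) : ν.part j ≤ size ν :=
  (Nat.le_mul_of_pos_left _ j.succ_pos).trans (ν.succ_mul_part_le_size j)

theorem part_eq_zero_of_size_le {ν : PartitionSeq} {j : ℕ} (h : size ν ≤ j) : ν.part j = 0 := by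
  by_contra hj
  have := (Nat.le_mul_of_pos_right (j + 1) (Nat.pos_of_ne_zero hj)).trans
    (ν.succ_mul_part_le_size j)
  omega

theorem finite_setOf_size_eq (n : ℕ) : {ν : PartitionSeq | size ν = n}.Finite := by
  have hinj : Set.InjOn (fun ν (j : Fin n) => ν.part j) {ν | size ν = n} := by
    intro ν hν σ hσ h
    ext j
    by_cases hj : j < n
    · exact congrFun h ⟨j, hj⟩
    · rw [part_eq_zero_of_size_le (hν.trans_le (not_lt.mp hj)),
        part_eq_zero_of_size_le (hσ.trans_le (not_lt.mp hj))]
  refine Set.Finite.of_finite_image ((Set.Finite.pi fun _ => Set.finite_Iic n).subset ?_) hinj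
  rintro _ ⟨ν, hν, rfl⟩ j -
  exact (part_le_size ν j).trans_eq hν

def tail (ρ : PartitionSeq) : PartitionSeq where
  part j := ρ.part (j + 1)
  antitone' _ _ hij := ρ.antitone' (Nat.succ_le_succ hij)
  eventually_zero := by
    obtain ⟨K, hK⟩ := ρ.eventually_zero
    exact ⟨K, fun i hi => hK (i + 1) (by omega)⟩

def cons (a : ℕ) (τ : PartitionSeq) (h : τ.part 0 ≤ a) : PartitionSeq where
  part
    | 0 => a
    | j + 1 => τ.part j
  antitone' := by
    refine antitone_nat_of_succ_le fun j => ?_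
    cases j with
    | zero => exact h
    | succ j => exact τ.antitone' j.le_succ
  eventually_zero := by
    obtain ⟨K, hK⟩ := τ.eventually_zero
    refine ⟨K + 1, fun i hi => ?_⟩
    obtain ⟨j, rfl⟩ : ∃ j, i = j + 1 := ⟨i - 1, by omega⟩
    exact hK j (by omega)

@[simp] theorem tail_part (ρ : PartitionSeq) (j : ℕ) : ρ.tail.part j = ρ.part (j + 1) := rfl

theorem tail_part_zero_le (ρ : PartitionSeq) : ρ.tail.part 0 ≤ ρ.part 0 :=
  ρ.antitone' zero_le_one

@[simp] theorem cons_part_zero (a : ℕ) (τ : PartitionSeq) (h : τ.part 0 ≤ a) :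
    (cons a τ h).part 0 = a := rfl

@[simp] theorem tail_cons (a : ℕ) (τ : PartitionSeq) (h : τ.part 0 ≤ a) :
    (cons a τ h).tail = τ := rfl

theorem ext_head_tail {ρ σ : PartitionSeq} (h0 : ρ.part 0 = σ.part 0) (ht : ρ.tail = σ.tail) :
    ρ = σ := by
  ext j
  cases j with
  | zero => exact h0
  | succ j => exact congrArg (·.part j) ht

theorem size_eq_part_zero_add_size_tail (ρ : PartitionSeq) : size ρ = ρ.part 0 + size ρ.tail := by
  obtain ⟨K, hK⟩ := ρ.eventually_zero
  rw [size_eq_sum_range ρ (K := K + 1) fun i hi => hK i (by omega),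
    size_eq_sum_range ρ.tail (K := K) fun i hi => hK (i + 1) (by omega),
    Finset.sum_range_succ', add_comm]
  rfl

theorem size_cons (a : ℕ) (τ : PartitionSeq) (h : τ.part 0 ≤ a) :
    size (cons a τ h) = a + size τ :=
  size_eq_part_zero_add_size_tail _

instance : Min PartitionSeq where
  min ν ν' :=
    { part j := min (ν.part j) (ν'.part j)
      antitone' _ _ hij := min_le_min (ν.antitone' hij) (ν'.antitone' hij)
      eventually_zero := by
        obtain ⟨K, hK⟩ := ν.eventually_zero
        exact ⟨K, fun i hi => by simp [hK i hi]⟩ }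

instance : Max PartitionSeq where
  max ν ν' :=
    { part j := max (ν.part j) (ν'.part j)
      antitone' _ _ hij := max_le_max (ν.antitone' hij) (ν'.antitone' hij)
      eventually_zero := by
        obtain ⟨K, hK⟩ := ν.eventually_zero
        obtain ⟨K', hK'⟩ := ν'.eventually_zero
        exact ⟨max K K', fun i hi => by
          simp [hK i (le_of_max_le_left hi), hK' i (le_of_max_le_right hi)]⟩ }

@[simp] theorem inf_part (ν ν' : PartitionSeq) (j : ℕ) :
    (ν ⊓ ν').part j = min (ν.part j) (ν'.part j) := rfl

@[simp] theorem sup_part (ν ν' : PartitionSeq) (j : ℕ) :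
    (ν ⊔ ν').part j = max (ν.part j) (ν'.part j) := rfl

theorem size_inf_add_size_sup (ν ν' : PartitionSeq) :
    size (ν ⊓ ν') + size (ν ⊔ ν') = size ν + size ν' :=
  size_add_size_of_part_add_part fun j => min_add_max (ν.part j) (ν'.part j)

end PartitionSeq

open PartitionSeq

theorem interlaces_iff_tail {lam ρ : PartitionSeq} :
    Interlaces lam ρ ↔ lam.part 0 ≤ ρ.part 0 ∧ Interlaces ρ.tail lam := by
  refine ⟨fun h => ⟨(h 0).1, fun j => ⟨(h j).2, (h (j + 1)).1⟩⟩, fun ⟨h0, h⟩ j => ?_⟩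
  cases j with
  | zero => exact ⟨h0, (h 0).1⟩
  | succ j => exact ⟨(h j).2, (h (j + 1)).1⟩

theorem interlaces_and_interlaces_iff {τ lam mu : PartitionSeq} :
    Interlaces τ lam ∧ Interlaces τ mu ↔
      ∀ j, (lam ⊔ mu).part (j + 1) ≤ τ.part j ∧ τ.part j ≤ (lam ⊓ mu).part j := by
  simp only [Interlaces, sup_part, inf_part, max_le_iff, le_min_iff, ← forall_and]
  exact forall_congr' fun j => by tauto

theorem interlaces_and_interlaces_iff_tail {lam mu ρ : PartitionSeq} :
    Interlaces lam ρ ∧ Interlaces mu ρ ↔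
      max (lam.part 0) (mu.part 0) ≤ ρ.part 0 ∧ Interlaces ρ.tail lam ∧ Interlaces ρ.tail mu := by
  rw [@interlaces_iff_tail lam ρ, @interlaces_iff_tail mu ρ, max_le_iff]
  tauto

def reflect (lam mu τ : PartitionSeq) (h : Interlaces τ lam ∧ Interlaces τ mu) :
    PartitionSeq where
  part j := (lam ⊓ mu).part j + (lam ⊔ mu).part (j + 1) - τ.part j
  antitone' := by
    have hb := interlaces_and_interlaces_iff.mp h
    refine antitone_nat_of_succ_le fun j => ?_
    have : (lam ⊓ mu).part (j + 1) ≤ (lam ⊔ mu).part (j + 1) := min_le_max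
    have := (hb j).2
    have := (hb (j + 1)).1
    omega
  eventually_zero := by
    have hb := interlaces_and_interlaces_iff.mp h
    obtain ⟨K, hK⟩ := (lam ⊓ mu).eventually_zero
    refine ⟨K, fun i hi => ?_⟩
    have := hK i hi
    have := (hb i).1
    omega

section Reflection

variable {lam mu : PartitionSeq}

theorem reflect_part {τ : PartitionSeq} (h : Interlaces τ lam ∧ Interlaces τ mu) (j : ℕ) :
    (reflect lam mu τ h).part j = (lam ⊓ mu).part j + (lam ⊔ mu).part (j + 1) - τ.part j :=
  rfl

theorem interlaces_reflect {τ : PartitionSeq} (h : Interlaces τ lam ∧ Interlaces τ mu) :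
    Interlaces (reflect lam mu τ h) lam ∧ Interlaces (reflect lam mu τ h) mu := by
  have hb := interlaces_and_interlaces_iff.mp h
  refine interlaces_and_interlaces_iff.mpr fun j => ?_
  have := hb j
  rw [reflect_part]
  omega

theorem reflect_reflect {τ : PartitionSeq} (h : Interlaces τ lam ∧ Interlaces τ mu) :
    reflect lam mu (reflect lam mu τ h) (interlaces_reflect h) = τ := by
  have hb := interlaces_and_interlaces_iff.mp h
  ext j
  have := hb j
  rw [reflect_part, reflect_part]
  omega

theorem size_add_size_reflect {τ : PartitionSeq} (h : Interlaces τ lam ∧ Interlaces τ mu) :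
    size τ + size (reflect lam mu τ h) + max (lam.part 0) (mu.part 0) = size lam + size mu := by
  have hb := interlaces_and_interlaces_iff.mp h
  have hsum : size τ + size (reflect lam mu τ h) = size (lam ⊓ mu) + size (lam ⊔ mu).tail :=
    size_add_size_of_part_add_part fun j => by
      have := hb j
      rw [reflect_part, tail_part]
      omega
  have hsup := size_eq_part_zero_add_size_tail (lam ⊔ mu)
  have := size_inf_add_size_sup lam mu
  rw [sup_part] at hsup
  omega

end Reflection

section Counting

variable (lam mu : PartitionSeq)

def upperInterlacers (N : ℤ) : Set PartitionSeq :=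
  {ρ | (size ρ : ℤ) = N ∧ Interlaces lam ρ ∧ Interlaces mu ρ}

def lowerInterlacers (M : ℤ) : Set PartitionSeq :=
  {η | (size η : ℤ) = M ∧ Interlaces η lam ∧ Interlaces η mu}

theorem ncard_lowerInterlacers_eq_of_add_eq {M M' : ℤ}
    (h : M + M' = size lam + size mu - max (lam.part 0) (mu.part 0)) :
    (lowerInterlacers lam mu M).ncard = (lowerInterlacers lam mu M').ncard := by
  refine Set.ncard_congr (fun τ hτ => reflect lam mu τ hτ.2) (fun τ hτ => ?_) ?_ ?_
  · have := size_add_size_reflect hτ.2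
    have := hτ.1
    exact ⟨by push_cast at h; omega, interlaces_reflect hτ.2⟩
  · intro τ σ hτ hσ hτσ
    rw [← reflect_reflect hτ.2, ← reflect_reflect hσ.2]
    simp only [hτσ]
  · intro η hη
    have := size_add_size_reflect hη.2
    have := hη.1
    exact ⟨reflect lam mu η hη.2, ⟨by push_cast at h; omega, interlaces_reflect hη.2⟩,
      reflect_reflect hη.2⟩

theorem finite_upperInterlacers (N : ℤ) : (upperInterlacers lam mu N).Finite :=
  (finite_setOf_size_eq N.toNat).subset fun ρ hρ => by
    have := hρ.1
    show size ρ = N.toNat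
    omega

theorem ncard_upperInterlacers_sub_one (N : ℤ) :
    (upperInterlacers lam mu (N - 1)).ncard =
      (upperInterlacers lam mu N \ {ρ | ρ.part 0 = max (lam.part 0) (mu.part 0)}).ncard := by
  refine Set.ncard_congr
    (fun σ _ => cons (σ.part 0 + 1) σ.tail (σ.tail_part_zero_le.trans (σ.part 0).le_succ))
    (fun σ hσ => ?_) (fun σ σ' _ _ h => ?_) (fun ρ hρ => ?_)
  · obtain ⟨hmax, htail⟩ := interlaces_and_interlaces_iff_tail.mp hσ.2
    have := hσ.1
    have := size_eq_part_zero_add_size_tail σ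
    refine ⟨⟨?_, interlaces_and_interlaces_iff_tail.mpr ⟨?_, htail⟩⟩, ?_⟩
    · rw [size_cons]
      push_cast
      omega
    · exact hmax.trans (σ.part 0).le_succ
    · exact (Nat.lt_succ_of_le hmax).ne'
  · have htail := congrArg tail h
    exact ext_head_tail (Nat.succ_injective (congrArg (·.part 0) h)) htail
  · obtain ⟨⟨hsize, hint⟩, hne⟩ := hρ
    obtain ⟨hmax, htail⟩ := interlaces_and_interlaces_iff_tail.mp hint
    have hlt : max (lam.part 0) (mu.part 0) < ρ.part 0 := lt_of_le_of_ne hmax (Ne.symm hne)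
    have hhead : ρ.tail.part 0 ≤ ρ.part 0 - 1 := by
      have := (htail.1 0).1
      have := le_max_left (lam.part 0) (mu.part 0)
      omega
    have := size_eq_part_zero_add_size_tail ρ
    refine ⟨cons (ρ.part 0 - 1) ρ.tail hhead,
      ⟨?_, interlaces_and_interlaces_iff_tail.mpr ⟨by simp only [cons_part_zero]; omega, htail⟩⟩,
      ext_head_tail (by simp only [cons_part_zero]; omega) rfl⟩
    rw [size_cons]
    push_cast
    omega

theorem ncard_upperInterlacers_inter_head_eq (N : ℤ) :
    (upperInterlacers lam mu N ∩ {ρ | ρ.part 0 = max (lam.part 0) (mu.part 0)}).ncard =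
      (lowerInterlacers lam mu (N - max (lam.part 0) (mu.part 0))).ncard := by
  refine Set.ncard_congr (fun ρ _ => ρ.tail) (fun ρ hρ => ?_) (fun ρ ρ' hρ hρ' h => ?_)
    (fun τ hτ => ?_)
  · obtain ⟨⟨hsize, hint⟩, hhead⟩ := hρ
    have := size_eq_part_zero_add_size_tail ρ
    refine ⟨?_, (interlaces_and_interlaces_iff_tail.mp hint).2⟩
    rw [← hhead]
    omega
  · exact ext_head_tail (hρ.2.trans hρ'.2.symm) h
  · have hhead : τ.part 0 ≤ max (lam.part 0) (mu.part 0) := (hτ.2.1 0).1.trans (le_max_left _ _)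
    refine ⟨cons _ τ hhead, ⟨⟨?_, interlaces_and_interlaces_iff_tail.mpr ⟨le_rfl, hτ.2⟩⟩, rfl⟩, rfl⟩
    have := hτ.1
    rw [size_cons]
    push_cast
    omega

theorem ncard_upperInterlacers_eq_add (N : ℤ) :
    (upperInterlacers lam mu N).ncard = (upperInterlacers lam mu (N - 1)).ncard +
      (lowerInterlacers lam mu (N - max (lam.part 0) (mu.part 0))).ncard := by
  rw [ncard_upperInterlacers_sub_one, ← ncard_upperInterlacers_inter_head_eq, add_comm,
    Set.ncard_inter_add_ncard_sdiff_eq_ncard _ _ (finite_upperInterlacers lam mu N)]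

end Counting

/-- With `f(N)` the number of partitions `ρ` with `|ρ| = N`, `λ ≺ ρ`,
`μ ≺ ρ`, and `g(M)` the number of partitions `η` with `|η| = M`, `η ≺ λ`, `η ≺ μ`, one
has `f(N) − f(N−1) = g(|λ| + |μ| − N)` for every integer `N`. -/
theorem statement7 (lam mu : PartitionSeq) (N : ℤ) :
    ({ρ : PartitionSeq | (size ρ : ℤ) = N ∧ Interlaces lam ρ ∧ Interlaces mu ρ}.ncard : ℤ)
      - ({ρ : PartitionSeq | (size ρ : ℤ) = N - 1 ∧ Interlaces lam ρ ∧
            Interlaces mu ρ}.ncard : ℤ)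
    = ({η : PartitionSeq | (size η : ℤ) = (size lam : ℤ) + (size mu : ℤ) - N ∧
          Interlaces η lam ∧ Interlaces η mu}.ncard : ℤ) := by
  change ((upperInterlacers lam mu N).ncard : ℤ) - (upperInterlacers lam mu (N - 1)).ncard =
    (lowerInterlacers lam mu (size lam + size mu - N)).ncard
  rw [ncard_upperInterlacers_eq_add, Nat.cast_add, add_sub_cancel_left,
    ncard_lowerInterlacers_eq_of_add_eq lam mu (M' := size lam + size mu - N) (by ring)]
end

section
/- Fix a positive integer n. For an edge sequence f: ℤ → {+1,−1} (i.e. f(t) = +1 for t sufficiently negative and f(t) = −1 for t sufficiently positive), define f_i(t) = f(nt + i) for 0 ≤ i ≤ n−1. Then each f_i is an edge sequence, the map f ↦ (f_0, …, f_{n−1}) is a bijection from the set of edge sequences onto the set of n-tuples of edge sequences, and the charge of f equals the sum of the charges of f_0, …, f_{n−1}; in particular, if f has charge zero then the charges of the f_i sum to zero. -/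
/-- An edge sequence: a `{±1}`-valued function on `ℤ` equal to `+1` near `−∞` and to
`−1` near `+∞`. -/
def IsEdgeSeq (f : ℤ → ℤ) : Prop :=
  (∀ t : ℤ, f t = 1 ∨ f t = -1) ∧
  (∃ A : ℤ, ∀ t : ℤ, t < A → f t = 1) ∧
  (∃ B : ℤ, ∀ t : ℤ, B < t → f t = -1)

/-- The charge of an edge sequence: `#{t ≥ 0 : f(t) = +1} − #{t < 0 : f(t) = −1}`. -/
noncomputable def charge (f : ℤ → ℤ) : ℤ :=
  ({t : ℤ | 0 ≤ t ∧ f t = 1}.ncard : ℤ) - ({t : ℤ | t < 0 ∧ f t = -1}.ncard : ℤ)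

/-- The `n`-tuple `(f_0, …, f_{n−1})` associated to `f`, where `f_i(t) = f(nt + i)`. -/
def quotientSeq (n : ℕ) (f : ℤ → ℤ) : Fin n → ℤ → ℤ :=
  fun i t => f ((n : ℤ) * t + (i : ℤ))

/-!
Division with remainder, `ℤ ≃ ℤ × Fin n`, identifies `f` with the tuple `(f_i)`; this gives the
bijection, and `f` is `±1`-valued with constant tails exactly when every `f_i` is.
For the charge: if `f = 1` below `-M` and `f = -1` from `M` on, then `2 * charge f` is the sum of
`f` over the symmetric window `[-M, M)`, because the "vacuum" sequence (`1` on negatives, `-1` on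
non-negatives) sums to zero there and `f` differs from it by `±2` exactly at the points counted by
the charge. Using the window `[-nM, nM)` for `f` and `[-M, M)` for each `f_i`, the two sums are the
same sum grouped by residues mod `n`.
-/

open Finset

def IsEdgeSeqWithin (M : ℕ) (f : ℤ → ℤ) : Prop :=
  (∀ t, f t = 1 ∨ f t = -1) ∧ (∀ t < -(M : ℤ), f t = 1) ∧ ∀ t ≥ (M : ℤ), f t = -1

theorem isEdgeSeq_iff_exists_isEdgeSeqWithin {f : ℤ → ℤ} :
    IsEdgeSeq f ↔ ∃ M, IsEdgeSeqWithin M f := by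
  constructor
  · rintro ⟨hpm, ⟨A, hA⟩, ⟨B, hB⟩⟩
    refine ⟨(-A).toNat + B.toNat + 1, hpm, fun t ht => hA t (by omega),
      fun t ht => hB t (by omega)⟩
  · rintro ⟨M, hpm, hlow, hhigh⟩
    exact ⟨hpm, ⟨-M, hlow⟩, ⟨M, fun t ht => hhigh t ht.le⟩⟩

theorem IsEdgeSeqWithin.mono {M N : ℕ} {f : ℤ → ℤ} (hMN : M ≤ N) (hf : IsEdgeSeqWithin M f) :
    IsEdgeSeqWithin N f :=
  ⟨hf.1, fun t ht => hf.2.1 t (by omega), fun t ht => hf.2.2 t (by omega)⟩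

theorem IsEdgeSeqWithin.quotientSeq {n M : ℕ} {f : ℤ → ℤ} (hn : 0 < n)
    (hf : IsEdgeSeqWithin M f) (i : Fin n) : IsEdgeSeqWithin M (quotientSeq n f i) := by
  obtain ⟨hpm, hlow, hhigh⟩ := hf
  have hi : (i : ℤ) < n := by exact_mod_cast i.isLt
  refine ⟨fun t => hpm _, fun t ht => hlow _ ?_, fun t ht => hhigh _ ?_⟩
  · nlinarith
  · nlinarith

theorem IsEdgeSeqWithin.two_mul_charge {M : ℕ} {f : ℤ → ℤ} (hf : IsEdgeSeqWithin M f) :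
    2 * charge f = ∑ t ∈ Ico (-(M : ℤ)) M, f t := by
  obtain ⟨hpm, hlow, hhigh⟩ := hf
  have hpos : {t : ℤ | 0 ≤ t ∧ f t = 1} = ↑({t ∈ Ico 0 (M : ℤ) | f t = 1}) := by
    ext t
    simp only [Set.mem_ofPred_eq, coe_filter, mem_Ico]
    refine ⟨fun ⟨h0, h1⟩ => ⟨⟨h0, ?_⟩, h1⟩, fun ⟨⟨h0, _⟩, h1⟩ => ⟨h0, h1⟩⟩
    by_contra hM
    have := hhigh t (by omega)
    omega
  have hneg : {t : ℤ | t < 0 ∧ f t = -1} = ↑({t ∈ Ico (-(M : ℤ)) 0 | f t = -1}) := by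
    ext t
    simp only [Set.mem_ofPred_eq, coe_filter, mem_Ico]
    refine ⟨fun ⟨h0, h1⟩ => ⟨⟨?_, h0⟩, h1⟩, fun ⟨⟨_, h0⟩, h1⟩ => ⟨h0, h1⟩⟩
    by_contra hM
    have := hlow t (by omega)
    omega
  have hsum_pos : ∑ t ∈ Ico 0 (M : ℤ), (f t + 1) = 2 * #{t ∈ Ico 0 (M : ℤ) | f t = 1} := by
    rw [← sum_boole, mul_sum]
    refine sum_congr rfl fun t _ => ?_
    rcases hpm t with h | h <;> simp [h]
  have hsum_neg : ∑ t ∈ Ico (-(M : ℤ)) 0, (f t - 1) =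
      -2 * #{t ∈ Ico (-(M : ℤ)) 0 | f t = -1} := by
    rw [← sum_boole, mul_sum]
    refine sum_congr rfl fun t _ => ?_
    rcases hpm t with h | h <;> simp [h]
  rw [sum_add_distrib] at hsum_pos
  rw [sum_sub_distrib] at hsum_neg
  simp only [sum_const, Int.card_Ico, nsmul_eq_mul, mul_one, sub_zero, zero_sub, neg_neg,
    Int.toNat_natCast] at hsum_pos hsum_neg
  rw [charge, hpos, hneg, Set.ncard_coe_finset, Set.ncard_coe_finset,
    ← Ico_union_Ico_eq_Ico (by omega : -(M : ℤ) ≤ 0) (by omega : (0 : ℤ) ≤ M),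
    sum_union (Ico_disjoint_Ico_consecutive _ _ _)]
  linarith

section divMod

variable (n : ℕ) [NeZero n]

theorem quotientSeq_divModEquiv (f : ℤ → ℤ) (s : ℤ) :
    quotientSeq n f (Int.divModEquiv n s).2 (Int.divModEquiv n s).1 = f s := by
  conv_rhs => rw [← (Int.divModEquiv n).symm_apply_apply s]
  rw [Int.divModEquiv_symm_apply, quotientSeq, mul_comm]

theorem quotientSeq_bijective : Function.Bijective (quotientSeq n) := by
  refine ⟨fun f f' h => funext fun s => ?_, fun g => ⟨fun s => g (Int.divModEquiv n s).2
    (Int.divModEquiv n s).1, funext fun i => funext fun t => ?_⟩⟩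
  · rw [← quotientSeq_divModEquiv n f, h, quotientSeq_divModEquiv]
  · have := (Int.divModEquiv n).apply_symm_apply (t, i)
    rw [Int.divModEquiv_symm_apply, mul_comm] at this
    simp only [quotientSeq, this]

theorem isEdgeSeqWithin_of_quotientSeq {M : ℕ} {f : ℤ → ℤ}
    (hf : ∀ i, IsEdgeSeqWithin M (quotientSeq n f i)) : IsEdgeSeqWithin (n * M) f := by
  have hn : (0 : ℤ) < n := by exact_mod_cast Nat.pos_of_neZero n
  refine ⟨fun s => ?_, fun s hs => ?_, fun s hs => ?_⟩ <;>
    rw [← quotientSeq_divModEquiv n f s]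
  · exact (hf _).1 _
  · refine (hf _).2.1 _ ((Int.ediv_lt_iff_lt_mul hn).2 ?_)
    push_cast at hs; linarith
  · refine (hf _).2.2 _ ((Int.le_ediv_iff_mul_le hn).2 ?_)
    push_cast at hs; linarith

theorem sum_Ico_mul_eq_sum_sum {M : Type*} [AddCommMonoid M] (g : ℤ → M) (a b : ℤ) :
    ∑ s ∈ Ico (n * a) (n * b), g s = ∑ t ∈ Ico a b, ∑ i : Fin n, g (n * t + i) := by
  have hn : (0 : ℤ) < n := by exact_mod_cast Nat.pos_of_neZero n
  rw [← sum_product']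
  refine sum_equiv (Int.divModEquiv n) (fun s => ?_) (fun s _ => ?_)
  · simp only [mem_Ico, mem_product, mem_univ, and_true, Int.divModEquiv_apply,
      Int.le_ediv_iff_mul_le hn, Int.ediv_lt_iff_lt_mul hn, mul_comm]
  · conv_lhs => rw [← (Int.divModEquiv n).symm_apply_apply s]
    rw [Int.divModEquiv_symm_apply, mul_comm]

end divMod

theorem isEdgeSeq_iff_forall_isEdgeSeq_quotientSeq {n : ℕ} (hn : 0 < n) {f : ℤ → ℤ} :
    IsEdgeSeq f ↔ ∀ i, IsEdgeSeq (quotientSeq n f i) := by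
  have : NeZero n := ⟨hn.ne'⟩
  simp only [isEdgeSeq_iff_exists_isEdgeSeqWithin]
  refine ⟨fun ⟨M, hf⟩ i => ⟨M, hf.quotientSeq hn i⟩, fun hf => ?_⟩
  choose M hM using hf
  exact ⟨n * univ.sup M, isEdgeSeqWithin_of_quotientSeq n fun i =>
    (hM i).mono (le_sup (mem_univ i))⟩

theorem charge_eq_sum_charge_quotientSeq {n : ℕ} (hn : 0 < n) {f : ℤ → ℤ}
    (hf : IsEdgeSeq f) : charge f = ∑ i : Fin n, charge (quotientSeq n f i) := by
  have : NeZero n := ⟨hn.ne'⟩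
  obtain ⟨M, hM⟩ := isEdgeSeq_iff_exists_isEdgeSeqWithin.1 hf
  have hM' : IsEdgeSeqWithin (n * M) f := hM.mono (Nat.le_mul_of_pos_left M hn)
  suffices 2 * charge f = 2 * ∑ i : Fin n, charge (quotientSeq n f i) by omega
  calc 2 * charge f = ∑ s ∈ Ico (n * -(M : ℤ)) (n * M), f s := by
        rw [hM'.two_mul_charge]; push_cast; ring_nf
    _ = ∑ i : Fin n, ∑ t ∈ Ico (-(M : ℤ)) M, quotientSeq n f i t := by
        rw [sum_Ico_mul_eq_sum_sum, sum_comm]; rfl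
    _ = 2 * ∑ i : Fin n, charge (quotientSeq n f i) := by
        simp only [mul_sum, (hM.quotientSeq hn _).two_mul_charge]

/-- For a positive integer `n`: each `f_i` of an edge sequence `f` is
an edge sequence; `f ↦ (f_0, …, f_{n−1})` is a bijection from edge sequences onto
`n`-tuples of edge sequences; and the charge of `f` is the sum of the charges of the
`f_i` — in particular, if `f` has charge zero then the charges of the `f_i` sum to
zero. -/
theorem statement13 (n : ℕ) (hn : 0 < n) :
    (∀ f : ℤ → ℤ, IsEdgeSeq f → ∀ i : Fin n, IsEdgeSeq (quotientSeq n f i)) ∧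
    Set.BijOn (quotientSeq n) {f : ℤ → ℤ | IsEdgeSeq f}
      {g : Fin n → ℤ → ℤ | ∀ i : Fin n, IsEdgeSeq (g i)} ∧
    (∀ f : ℤ → ℤ, IsEdgeSeq f → charge f = ∑ i : Fin n, charge (quotientSeq n f i)) ∧
    (∀ f : ℤ → ℤ, IsEdgeSeq f → charge f = 0 →
      ∑ i : Fin n, charge (quotientSeq n f i) = 0) := by
  have : NeZero n := ⟨hn.ne'⟩
  have hsource : {f : ℤ → ℤ | IsEdgeSeq f} =
      quotientSeq n ⁻¹' {g | ∀ i : Fin n, IsEdgeSeq (g i)} :=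
    Set.ext fun f => isEdgeSeq_iff_forall_isEdgeSeq_quotientSeq hn
  refine ⟨fun f hf => (isEdgeSeq_iff_forall_isEdgeSeq_quotientSeq hn).1 hf, ?_,
    fun f hf => charge_eq_sum_charge_quotientSeq hn hf, fun f hf h0 => ?_⟩
  · rw [hsource]
    exact (quotientSeq_bijective n).bijOn_preimage
  · rw [← charge_eq_sum_charge_quotientSeq hn hf, h0]
end
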